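/- Suppose λ, μ > 0 and u² < f < ū where ū = (μu¹+λu²)/(λ+μ). Then there exist b > 0 and k₁, k₂ > 0 such that (b(f-u¹)-λ)k₁ + λk₂ ≤ -1 and μk₁ + (b(f-u²)-μ)k₂ ≤ -1. -/

import Mathlib

/-!
The hypothesis on `f` says that the drift averaged over the stationary law `(m, l) / (l + m)` of
the mode is negative: `m (f - u1) + l (f - u2) < 0`. The matrix `M(b)` is Metzler, its diagonal
tends to `(-l, -m)` as `b → 0`, and `det M(b) = b (b (f - u1)(f - u2) - (m (f - u1) + l (f - u2)))`
is positive for small `b > 0`. For a `2 × 2` Metzler matrix with negative diagonal and positive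
determinant, `adj M (1, 1) / det M` is a positive solution of `M k = (-1, -1)`.
-/

open Filter Topology

theorem exists_pos_solution_of_metzler_of_det_pos {p q s t : ℝ} (hp : p < 0) (ht : t < 0)
    (hq : 0 ≤ q) (hs : 0 ≤ s) (hdet : 0 < p * t - q * s) :
    ∃ k1 k2 : ℝ, 0 < k1 ∧ 0 < k2 ∧ p * k1 + q * k2 = -1 ∧ s * k1 + t * k2 = -1 := by
  have hdet' := hdet.ne'
  refine ⟨(q - t) / (p * t - q * s), (s - p) / (p * t - q * s),
    div_pos (by linarith) hdet, div_pos (by linarith) hdet, ?_, ?_⟩ <;>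
  · rw [mul_div_assoc', mul_div_assoc', ← add_div, div_eq_iff hdet']
    ring

theorem eventually_diag_neg_and_det_pos {l m d1 d2 : ℝ} (hl : 0 < l) (hm : 0 < m)
    (hdrift : m * d1 + l * d2 < 0) :
    ∀ᶠ b in 𝓝[>] (0 : ℝ), 0 < b ∧ b * d1 - l < 0 ∧ b * d2 - m < 0 ∧
      0 < (b * d1 - l) * (b * d2 - m) - l * m := by
  have hdiag1 : ∀ᶠ b in 𝓝 (0 : ℝ), b * d1 - l < 0 :=
    (by fun_prop : Continuous fun b : ℝ => b * d1 - l).tendsto 0 |>.eventually_lt_const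
      (by simpa using hl)
  have hdiag2 : ∀ᶠ b in 𝓝 (0 : ℝ), b * d2 - m < 0 :=
    (by fun_prop : Continuous fun b : ℝ => b * d2 - m).tendsto 0 |>.eventually_lt_const
      (by simpa using hm)
  have hdet_div : ∀ᶠ b in 𝓝 (0 : ℝ), 0 < b * (d1 * d2) - (m * d1 + l * d2) :=
    (by fun_prop : Continuous fun b : ℝ => b * (d1 * d2) - (m * d1 + l * d2)).tendsto 0
      |>.eventually_const_lt (by simp; linarith)
  filter_upwards [self_mem_nhdsWithin, nhdsWithin_le_nhds (hdiag1.and (hdiag2.and hdet_div))]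
    with b (hb : 0 < b) ⟨hb1, hb2, hb3⟩
  refine ⟨hb, hb1, hb2, ?_⟩
  calc 0 < b * (b * (d1 * d2) - (m * d1 + l * d2)) := mul_pos hb hb3
    _ = (b * d1 - l) * (b * d2 - m) - l * m := by ring

theorem exists_lyapunov_general (l m f u1 u2 : ℝ) (hl : 0 < l) (hm : 0 < m)
    (h2 : f < (m * u1 + l * u2) / (l + m)) :
    ∃ b k1 k2 : ℝ, 0 < b ∧ 0 < k1 ∧ 0 < k2 ∧
      (b * (f - u1) - l) * k1 + l * k2 ≤ -1 ∧
      m * k1 + (b * (f - u2) - m) * k2 ≤ -1 := by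
  have hdrift : m * (f - u1) + l * (f - u2) < 0 := by
    rw [lt_div_iff₀ (by positivity)] at h2
    linarith
  obtain ⟨b, hb, hdiag1, hdiag2, hdet⟩ := (eventually_diag_neg_and_det_pos hl hm hdrift).exists
  obtain ⟨k1, k2, hk1, hk2, hrow1, hrow2⟩ :=
    exists_pos_solution_of_metzler_of_det_pos hdiag1 hdiag2 hl.le hm.le hdet
  exact ⟨b, k1, k2, hb, hk1, hk2, hrow1.le, hrow2.le⟩

theorem exists_lyapunov (l m f u1 u2 : ℝ) (hl : 0 < l) (hm : 0 < m)
    (h1 : u2 < f) (h2 : f < (m * u1 + l * u2) / (l + m)) :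
    ∃ b k1 k2 : ℝ, 0 < b ∧ 0 < k1 ∧ 0 < k2 ∧
      (b * (f - u1) - l) * k1 + l * k2 ≤ -1 ∧
      m * k1 + (b * (f - u2) - m) * k2 ≤ -1 :=
  exists_lyapunov_general l m f u1 u2 hl hm h2
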